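/- Suppose g : ℕ⁺ → ℝ satisfies g(ℓ) ≥ 1 for all ℓ and g(1) = 1, and 0 < C < 4 is a real constant such that for all ℓ ≥ 2, Σ_{i=1}^{ℓ-1} g(ℓ)/(g(i)g(ℓ-i)) ≤ C. Then for any a with C/4 < a < 1, the value A = Σ_{i=1}^∞ a^i/g(i) is a nonnegative real number satisfying A² - C·A + C·a ≤ 0, which is impossible since the discriminant C² - 4Ca is negative. -/

import Mathlib

/-!
Put `A = ∑_{i ≥ 1} aⁱ / g(i)`, a convergent series since `g ≥ 1` and `0 < a < 1`. The coefficient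
of `a^ℓ` in `A²` is `∑_{i=1}^{ℓ-1} 1 / (g(i) g(ℓ-i)) ≤ C / g(ℓ)`, so comparing coefficients gives
`A² ≤ C (A - a)`, the term `a / g(1) = a` being the one missing on the right. A real root of
`X² - C X + C a` would force `C² ≥ 4 C a`, contradicting `a > C / 4`.
-/

open Finset

theorem Finset.Nat.sum_Ico_one_eq_sum_antidiagonal {M : Type*} [AddCommMonoid M]
    (h : ℕ → ℕ → M) (n : ℕ) :
    ∑ i ∈ Ico 1 (n + 2), h i (n + 2 - i) = ∑ p ∈ antidiagonal n, h (p.1 + 1) (p.2 + 1) := by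
  rw [sum_Ico_eq_sum_range, Nat.sum_antidiagonal_eq_sum_range_succ_mk]
  refine sum_congr rfl fun k hk => ?_
  have hk : k ≤ n := Nat.lt_succ_iff.mp (mem_range.mp hk)
  rw [add_comm 1 k, show n + 2 - (k + 1) = n - k + 1 by omega]

theorem sq_tsum_le_of_sum_antidiagonal_le {f : ℕ → ℝ} {C : ℝ} (hf : ∀ n, 0 ≤ f n)
    (hs : Summable f) (h : ∀ n, ∑ p ∈ antidiagonal n, f p.1 * f p.2 ≤ C * f (n + 1)) :
    (∑' n, f n) ^ 2 ≤ C * (∑' n, f n - f 0) := by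
  have hnorm : Summable fun n => ‖f n‖ := by
    simpa only [Real.norm_of_nonneg (hf _)] using hs
  have hcauchy : Summable fun n => ∑ p ∈ antidiagonal n, f p.1 * f p.2 :=
    (summable_norm_sum_mul_antidiagonal_of_summable_norm hnorm hnorm).of_norm
  have htail : Summable fun n => C * f (n + 1) :=
    ((summable_nat_add_iff 1).2 hs).mul_left C
  calc (∑' n, f n) ^ 2 = ∑' n, ∑ p ∈ antidiagonal n, f p.1 * f p.2 := by
        rw [sq, tsum_mul_tsum_eq_tsum_sum_antidiagonal_of_summable_norm hnorm hnorm]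
    _ ≤ ∑' n, C * f (n + 1) := hcauchy.tsum_le_tsum h htail
    _ = C * (∑' n, f n - f 0) := by
        rw [tsum_mul_left, hs.tsum_eq_zero_add, add_sub_cancel_left]

section WeightedGeometric

variable {g : ℕ → ℝ} {a : ℝ}

theorem summable_pow_succ_div (hg : ∀ n, 1 ≤ g (n + 1)) (ha0 : 0 ≤ a) (ha1 : a < 1) :
    Summable fun n => a ^ (n + 1) / g (n + 1) := by
  refine Summable.of_nonneg_of_le (fun n => div_nonneg (pow_nonneg ha0 _) (by linarith [hg n]))
    (fun n => div_le_self (pow_nonneg ha0 _) (hg n)) ?_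
  simpa only [pow_succ] using (summable_geometric_of_lt_one ha0 ha1).mul_right a

theorem sum_antidiagonal_pow_succ_div_le {C : ℝ} (hg : ∀ n, 0 < g (n + 1)) (ha : 0 ≤ a) (n : ℕ)
    (hsum : ∑ p ∈ antidiagonal n, g (n + 2) / (g (p.1 + 1) * g (p.2 + 1)) ≤ C) :
    ∑ p ∈ antidiagonal n, a ^ (p.1 + 1) / g (p.1 + 1) * (a ^ (p.2 + 1) / g (p.2 + 1))
      ≤ C * (a ^ (n + 2) / g (n + 2)) := by
  have hfactor : ∀ p ∈ antidiagonal n,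
      a ^ (p.1 + 1) / g (p.1 + 1) * (a ^ (p.2 + 1) / g (p.2 + 1))
        = a ^ (n + 2) / g (n + 2) * (g (n + 2) / (g (p.1 + 1) * g (p.2 + 1))) := by
    intro p hp
    rw [HasAntidiagonal.mem_antidiagonal] at hp
    have := (hg (n + 1)).ne'
    rw [div_mul_div_comm, ← pow_add, show p.1 + 1 + (p.2 + 1) = n + 2 by omega]
    field_simp
  rw [sum_congr rfl hfactor, ← mul_sum, mul_comm C]
  exact mul_le_mul_of_nonneg_left hsum (div_nonneg (pow_nonneg ha _) (hg (n + 1)).le)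

end WeightedGeometric

theorem discrim_neg_of_lt_mul {C a : ℝ} (hC : 0 < C) (ha : C / 4 < a) :
    C ^ 2 - 4 * C * a < 0 := by
  nlinarith

theorem stmt_4_general (g : ℕ → ℝ) (C a : ℝ)
    (hg1 : g 1 = 1) (hg : ∀ ℓ : ℕ, 1 ≤ ℓ → 1 ≤ g ℓ)
    (hC0 : 0 < C)
    (hsum : ∀ ℓ : ℕ, 2 ≤ ℓ → ∑ i ∈ Finset.Ico 1 ℓ, g ℓ / (g i * g (ℓ - i)) ≤ C)
    (ha1 : C / 4 < a) (ha2 : a < 1) :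
    0 ≤ (∑' n : ℕ, a ^ (n + 1) / g (n + 1)) ∧
    (∑' n : ℕ, a ^ (n + 1) / g (n + 1)) ^ 2
      - C * (∑' n : ℕ, a ^ (n + 1) / g (n + 1)) + C * a ≤ 0 ∧
    C ^ 2 - 4 * C * a < 0 := by
  have ha0 : 0 ≤ a := by linarith
  have hg' : ∀ n, 1 ≤ g (n + 1) := fun n => hg (n + 1) (Nat.le_add_left 1 n)
  have hgpos : ∀ n, 0 < g (n + 1) := fun n => one_pos.trans_le (hg' n)
  have hterm : ∀ n, 0 ≤ a ^ (n + 1) / g (n + 1) :=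
    fun n => div_nonneg (pow_nonneg ha0 _) (hgpos n).le
  have hsq := sq_tsum_le_of_sum_antidiagonal_le hterm (summable_pow_succ_div hg' ha0 ha2)
    fun n => sum_antidiagonal_pow_succ_div_le hgpos ha0 n <|
      (Finset.Nat.sum_Ico_one_eq_sum_antidiagonal (fun i j => g (n + 2) / (g i * g j))
        n).symm.trans_le (hsum (n + 2) (Nat.le_add_left 2 n))
  simp only [zero_add, pow_one, hg1, div_one] at hsq
  exact ⟨tsum_nonneg hterm, by linarith, discrim_neg_of_lt_mul hC0 ha1⟩

theorem stmt_4 (g : ℕ → ℝ) (C a : ℝ)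
    (hg1 : g 1 = 1) (hg : ∀ ℓ : ℕ, 1 ≤ ℓ → 1 ≤ g ℓ)
    (hC0 : 0 < C) (hC4 : C < 4)
    (hsum : ∀ ℓ : ℕ, 2 ≤ ℓ → ∑ i ∈ Finset.Ico 1 ℓ, g ℓ / (g i * g (ℓ - i)) ≤ C)
    (ha1 : C / 4 < a) (ha2 : a < 1) :
    0 ≤ (∑' n : ℕ, a ^ (n + 1) / g (n + 1)) ∧
    (∑' n : ℕ, a ^ (n + 1) / g (n + 1)) ^ 2
      - C * (∑' n : ℕ, a ^ (n + 1) / g (n + 1)) + C * a ≤ 0 ∧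
    C ^ 2 - 4 * C * a < 0 :=
  stmt_4_general g C a hg1 hg hC0 hsum ha1 ha2
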